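/- Let 0 < ε < 1 and let l ≥ 2 be an integer with l·ε < 1. Let S have the distribution P(S=0) = (1-ε)^{l-1}, P(S=s) = ((l-1)/s) ε^s (1-ε)^{s(l-1)} C((s-1)l, s-1) for s ≥ 1. Then E(S²) = E(S) + l(l-1) ε² (1-ε)^l / (1-lε)³, where E(S) = (l-1)ε(1-ε)^{l-1}/(1-lε). -/

import Mathlib

/-
Write z = ε(1-ε)^(l-1). Then the k-th term of the series is (l-1)ε(1-ε)^(l-1) · (k+1) C(kl,k) z^k,
so everything reduces to the generating function F(z) = ∑ C(kl,k) z^k and to z F'(z).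

Expanding (1-ε)^(k(l-1)) binomially, the coefficient of ε^n in F(ε(1-ε)^(l-1)) is
∑_k (-1)^(n-k) C(kl,k) C(k(l-1),n-k) = ∑_k (-1)^(n-k) C(n,k) C(kl,n), the n-th finite difference
of the degree-n polynomial k ↦ C(kl,n), whose leading coefficient is l^n/n!; so the coefficient is
l^n, and F(ε(1-ε)^(l-1)) = 1/(1-lε) for small ε, where the double series converges absolutely.
Since z increases on [0, 1/l] and C(kl,k) z(1/l)^k ≤ 1 (a binomial probability), z stays inside
the disc of convergence of F for 0 ≤ ε < 1/l, and the identity extends to all of (0, 1/l) by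
analytic continuation. Differentiating it in ε gives z F'(z) = lε(1-ε)/(1-lε)^3.
-/

open Finset Polynomial

theorem sum_alternating_choose_mul_choose_mul {l : ℕ} (hl : 0 < l) (n : ℕ) :
    ∑ k ∈ range (n + 1), (-1 : ℤ) ^ (n - k) * n.choose k * (k * l).choose n = l ^ n := by
  set P : ℤ[X] := (descPochhammer ℤ n).comp (C (l : ℤ) * X)
  have hl' : (l : ℤ) ≠ 0 := by positivity
  have hdeg : P.natDegree = n := by
    rw [natDegree_comp, descPochhammer_natDegree, natDegree_C_mul_X _ hl', mul_one]
  have hlead : P.leadingCoeff = l ^ n := by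
    rw [leadingCoeff_comp (by rw [natDegree_C_mul_X _ hl']; exact one_ne_zero),
      (monic_descPochhammer ℤ n).leadingCoeff, leadingCoeff_C_mul_X, descPochhammer_natDegree,
      one_mul]
  have heval (k : ℕ) : P.eval (k : ℤ) = n.factorial * (k * l).choose n := by
    rw [eval_comp, eval_mul, eval_C, eval_X, ← Nat.cast_mul, mul_comm l,
      descPochhammer_eval_eq_descFactorial, Nat.descFactorial_eq_factorial_mul_choose]
    push_cast; ring
  have hdiff := congrFun P.fwdDiff_iter_degree_eq_factorial 0
  rw [fwdDiff_iter_eq_sum_shift, hdeg, hlead] at hdiff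
  simp only [zero_add, nsmul_eq_mul, mul_one, smul_eq_mul, heval] at hdiff
  apply mul_left_cancel₀ (Nat.cast_ne_zero.mpr (Nat.factorial_ne_zero n) : (n.factorial : ℤ) ≠ 0)
  rw [mul_sum]
  simpa [mul_comm, mul_left_comm, mul_assoc] using hdiff

theorem sum_alternating_choose_mul_choose_sub {l : ℕ} (hl : 0 < l) (n : ℕ) :
    ∑ k ∈ range (n + 1), (-1 : ℤ) ^ (n - k) * ((k * l).choose k * (k * (l - 1)).choose (n - k))
      = l ^ n := by
  rw [← sum_alternating_choose_mul_choose_mul hl n]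
  refine sum_congr rfl fun k hk => ?_
  rw [show k * (l - 1) = k * l - k by rw [Nat.mul_sub_one],
    ← Nat.cast_mul, ← Nat.choose_mul (Nat.lt_succ_iff.mp (mem_range.mp hk)), mul_comm]
  push_cast; ring

theorem hasSum_choose_mul_pow {R : Type*} [CommSemiring R] [TopologicalSpace R] (n : ℕ) (x : R) :
    HasSum (fun j => (n.choose j : R) * x ^ j) ((1 + x) ^ n) := by
  have hexp : (1 + x) ^ n = ∑ j ∈ range (n + 1), (n.choose j : R) * x ^ j := by
    simp [add_comm 1 x, add_pow, mul_comm]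
  rw [hexp]
  exact hasSum_sum_of_ne_finset_zero fun j hj => by
    simp [Nat.choose_eq_zero_of_lt (by simpa [Nat.lt_succ_iff] using hj)]

theorem Summable.tsum_eq_tsum_sum_antidiagonal {α : Type*} [AddCommMonoid α] [TopologicalSpace α]
    [T3Space α] [ContinuousAdd α] {f : ℕ × ℕ → α} (hf : Summable f) :
    ∑' p, f p = ∑' n, ∑ p ∈ antidiagonal n, f p := by
  conv_rhs => congr; ext; rw [← Finset.sum_finset_coe, ← tsum_fintype (L := .unconditional _)]
  rw [← Finset.HasAntidiagonal.sigmaAntidiagonalEquivProd.tsum_eq f]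
  exact (Finset.HasAntidiagonal.sigmaAntidiagonalEquivProd.summable_iff.mpr hf).tsum_sigma'
    fun n => (hasSum_fintype _).summable

theorem lt_inv_iff_mul_lt_one₀ {α : Type*} [Field α] [LinearOrder α] [IsStrictOrderedRing α]
    {a b : α} (hb : 0 < b) : a < b⁻¹ ↔ b * a < 1 := by
  rw [← lt_inv_mul_iff₀ hb, mul_one]

section BoundedCoefficients

variable {c : ℕ → ℝ} {ρ w : ℝ}

theorem summable_pow_mul_coeff_mul_pow (hc : ∀ k, |c k| * ρ ^ k ≤ 1) (hw : |w| < ρ) (j : ℕ) :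
    Summable fun k : ℕ => (k : ℝ) ^ j * c k * w ^ k := by
  have hρ : 0 < ρ := (abs_nonneg w).trans_lt hw
  have hq : ‖|w| / ρ‖ < 1 := by
    rwa [Real.norm_eq_abs, abs_div, abs_abs, abs_of_pos hρ, div_lt_one hρ]
  refine (summable_pow_mul_geometric_of_norm_lt_one j hq).of_norm_bounded fun k => ?_
  have hck : |c k| * |w| ^ k ≤ (|w| / ρ) ^ k := by
    rw [div_pow, le_div_iff₀ (by positivity)]
    calc |c k| * |w| ^ k * ρ ^ k = |c k| * ρ ^ k * |w| ^ k := by ring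
      _ ≤ 1 * |w| ^ k := by gcongr; exact hc k
      _ = |w| ^ k := one_mul _
  rw [Real.norm_eq_abs, abs_mul, abs_mul, abs_pow, abs_pow, Nat.abs_cast, mul_assoc]
  gcongr

theorem hasDerivAt_tsum_coeff_mul_pow (hc : ∀ k, |c k| * ρ ^ k ≤ 1) (hw : |w| < ρ) :
    HasDerivAt (fun x => ∑' k, c k * x ^ k) (∑' k, c k * (k * w ^ (k - 1))) w := by
  obtain ⟨r, hwr, hrρ⟩ := exists_between hw
  have hr : 0 < r := (abs_nonneg w).trans_lt hwr
  have hu : Summable fun k : ℕ => |c k| * (k * r ^ (k - 1)) := by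
    have := (summable_pow_mul_coeff_mul_pow (c := fun k => |c k|) (by simpa using hc)
      (by rwa [abs_of_pos hr]) 1).mul_left r⁻¹
    refine this.congr fun k => ?_
    rcases k with _ | k
    · simp
    · rw [Nat.add_sub_cancel, pow_succ]
      field_simp
      ring
  have hwball : w ∈ Metric.ball (0 : ℝ) r := by simpa using hwr
  refine hasDerivAt_tsum_of_isPreconnected hu Metric.isOpen_ball
    (convex_ball (0 : ℝ) r).isPreconnected (fun k y _ => (hasDerivAt_pow k y).const_mul (c k))
    (fun k y hy => ?_) hwball
    (by simpa using summable_pow_mul_coeff_mul_pow hc hw 0) hwball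
  rw [mem_ball_zero_iff, Real.norm_eq_abs] at hy
  rw [Real.norm_eq_abs, abs_mul, abs_mul, abs_pow, Nat.abs_cast]
  gcongr

theorem analyticAt_tsum_coeff_mul_pow (hc : ∀ k, |c k| * ρ ^ k ≤ 1) (hw : |w| < ρ) :
    AnalyticAt ℝ (fun x => ∑' k, c k * x ^ k) w := by
  have hρ : 0 < ρ := (abs_nonneg w).trans_lt hw
  set p := FormalMultilinearSeries.ofScalars ℝ c
  have hrad : (ρ.toNNReal : ENNReal) ≤ p.radius :=
    p.le_radius_of_bound 1 fun n => by
      rw [FormalMultilinearSeries.ofScalars_norm, Real.norm_eq_abs, Real.coe_toNNReal _ hρ.le]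
      exact hc n
  have hpos : 0 < p.radius := lt_of_lt_of_le (by simpa using hρ) hrad
  have hmem : w ∈ Metric.eball (0 : ℝ) p.radius := by
    rw [mem_eball_zero_iff]
    refine lt_of_lt_of_le ?_ hrad
    rw [enorm_eq_nnnorm, ENNReal.coe_lt_coe, ← NNReal.coe_lt_coe, coe_nnnorm, Real.norm_eq_abs,
      Real.coe_toNNReal _ hρ.le]
    exact hw
  have hsum : p.sum = fun x => ∑' k, c k * x ^ k := funext fun x => by
    simp [p, FormalMultilinearSeries.sum, mul_comm]
  exact hsum ▸ (p.hasFPowerSeriesOnBall hpos).analyticAt_of_mem hmem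

end BoundedCoefficients

noncomputable def binomWeight (l : ℕ) (t : ℝ) : ℝ := t * (1 - t) ^ (l - 1)

noncomputable def chooseGF (l : ℕ) (w : ℝ) : ℝ := ∑' k : ℕ, ((k * l).choose k : ℝ) * w ^ k

section BinomWeight

variable {l : ℕ} {t : ℝ}

theorem binomWeight_nonneg (ht0 : 0 ≤ t) (ht1 : t ≤ 1) : 0 ≤ binomWeight l t :=
  mul_nonneg ht0 (pow_nonneg (sub_nonneg.2 ht1) _)

theorem choose_mul_binomWeight_pow_le_one (hl : 0 < l) (ht0 : 0 ≤ t) (ht1 : t ≤ 1) (k : ℕ) :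
    ((k * l).choose k : ℝ) * binomWeight l t ^ k ≤ 1 := by
  have hpow : binomWeight l t ^ k = t ^ k * (1 - t) ^ (k * l - k) := by
    rw [binomWeight, mul_pow, ← pow_mul, mul_comm (l - 1), Nat.mul_sub_one]
  calc ((k * l).choose k : ℝ) * binomWeight l t ^ k
      = t ^ k * (1 - t) ^ (k * l - k) * (k * l).choose k := by rw [hpow]; ring
    _ ≤ ∑ m ∈ range (k * l + 1), t ^ m * (1 - t) ^ (k * l - m) * (k * l).choose m := by
      refine single_le_sum (f := fun m => t ^ m * (1 - t) ^ (k * l - m) * (k * l).choose m)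
        (fun m _ => by have := sub_nonneg.2 ht1; positivity) ?_
      rw [mem_range]
      nlinarith
    _ = 1 := by rw [← add_pow, add_sub_cancel, one_pow]

theorem hasDerivAt_binomWeight (hl : 2 ≤ l) (x : ℝ) :
    HasDerivAt (binomWeight l) ((1 - x) ^ (l - 2) * (1 - l * x)) x := by
  obtain ⟨m, rfl⟩ := Nat.exists_eq_add_of_le hl
  have hfun : binomWeight (2 + m) = fun x => x * (1 - x) ^ (m + 1) := by
    funext y
    rw [binomWeight, show 2 + m - 1 = m + 1 by omega]
  rw [hfun]
  refine ((hasDerivAt_id' x).fun_mul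
    (((hasDerivAt_id' x).const_sub 1).fun_pow (m + 1))).congr_deriv ?_
  rw [show 2 + m - 2 = m by omega, Nat.add_sub_cancel]
  push_cast
  ring

theorem binomWeight_strictMonoOn (hl : 2 ≤ l) :
    StrictMonoOn (binomWeight l) (Set.Icc 0 (l : ℝ)⁻¹) := by
  have hl0 : (0 : ℝ) < l := by positivity
  refine strictMonoOn_of_deriv_pos (convex_Icc _ _) ?_ fun x hx => ?_
  · exact (continuous_id.mul ((continuous_const.sub continuous_id).pow _)).continuousOn
  rw [interior_Icc, Set.mem_Ioo] at hx
  have hlx := (lt_inv_iff_mul_lt_one₀ hl0).1 hx.2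
  rw [(hasDerivAt_binomWeight hl x).deriv]
  have : (2 : ℝ) ≤ l := by exact_mod_cast hl
  have : x < 1 := by nlinarith
  have : 0 < 1 - x := by linarith
  have : 0 < 1 - l * x := by linarith
  positivity

theorem abs_binomWeight_lt (hl : 2 ≤ l) (ht0 : 0 ≤ t) (ht : l * t < 1) :
    |binomWeight l t| < binomWeight l (l : ℝ)⁻¹ := by
  have hl0 : (0 : ℝ) < l := by positivity
  have htl : t < (l : ℝ)⁻¹ := (lt_inv_iff_mul_lt_one₀ hl0).2 ht
  have ht1 : t ≤ 1 := by
    have : (2 : ℝ) ≤ l := by exact_mod_cast hl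
    nlinarith
  rw [abs_of_nonneg (binomWeight_nonneg ht0 ht1)]
  exact binomWeight_strictMonoOn hl ⟨ht0, htl.le⟩ ⟨by positivity, le_rfl⟩ htl

theorem abs_choose_mul_binomWeight_inv_pow_le_one (hl : 0 < l) (k : ℕ) :
    |((k * l).choose k : ℝ)| * binomWeight l (l : ℝ)⁻¹ ^ k ≤ 1 := by
  rw [Nat.abs_cast]
  exact choose_mul_binomWeight_pow_le_one hl (by positivity)
    (inv_le_one_of_one_le₀ (by exact_mod_cast hl)) k

theorem analyticAt_chooseGF (hl : 0 < l) {w : ℝ} (hw : |w| < binomWeight l (l : ℝ)⁻¹) :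
    AnalyticAt ℝ (chooseGF l) w :=
  analyticAt_tsum_coeff_mul_pow (abs_choose_mul_binomWeight_inv_pow_le_one hl) hw

theorem chooseGF_binomWeight_of_small (hl : 0 < l) (ht0 : 0 ≤ t)
    (hsmall : t * (1 + t) ^ (l - 1) < binomWeight l (l : ℝ)⁻¹) (ht : l * t < 1) :
    chooseGF l (binomWeight l t) = (1 - l * t)⁻¹ := by
  set f : ℕ × ℕ → ℝ := fun p =>
    (p.1 * l).choose p.1 * ((p.1 * (l - 1)).choose p.2 * (-t) ^ p.2) * t ^ p.1
  have hrow (k : ℕ) : HasSum (fun j => f (k, j)) ((k * l).choose k * binomWeight l t ^ k) := by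
    have hval : binomWeight l t ^ k = (1 + -t) ^ (k * (l - 1)) * t ^ k := by
      rw [binomWeight, mul_pow, ← pow_mul, ← sub_eq_add_neg, mul_comm (l - 1), mul_comm]
    rw [hval, ← mul_assoc]
    exact ((hasSum_choose_mul_pow (k * (l - 1)) (-t)).mul_left _).mul_right _
  have hrow_norm (k : ℕ) : HasSum (fun j => ‖f (k, j)‖)
      ((k * l).choose k * (t * (1 + t) ^ (l - 1)) ^ k) := by
    have hval : (t * (1 + t) ^ (l - 1)) ^ k = (1 + t) ^ (k * (l - 1)) * t ^ k := by
      rw [mul_pow, ← pow_mul, mul_comm (l - 1), mul_comm]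
    rw [hval, ← mul_assoc]
    refine (((hasSum_choose_mul_pow (k * (l - 1)) t).mul_left _).mul_right _).congr_fun fun j => ?_
    simp [f, abs_of_nonneg ht0]
  have hf : Summable f := by
    refine Summable.of_norm ((summable_prod_of_nonneg fun _ => norm_nonneg _).2
      ⟨fun k => (hrow_norm k).summable, ?_⟩)
    refine ((summable_pow_mul_coeff_mul_pow (w := t * (1 + t) ^ (l - 1))
      (abs_choose_mul_binomWeight_inv_pow_le_one hl)
      (by rwa [abs_of_nonneg (by positivity)]) 0).congr fun k => ?_)
    rw [(hrow_norm k).tsum_eq, pow_zero, one_mul]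
  have hdiag (n : ℕ) : ∑ p ∈ antidiagonal n, f p = ((l : ℝ) * t) ^ n := by
    have hid := congrArg (Int.cast : ℤ → ℝ) (sum_alternating_choose_mul_choose_sub hl n)
    push_cast at hid
    rw [Nat.sum_antidiagonal_eq_sum_range_succ_mk, mul_pow, ← hid, sum_mul]
    refine sum_congr rfl fun k hk => ?_
    rw [← pow_sub_mul_pow t (Nat.lt_succ_iff.mp (mem_range.mp hk))]
    simp only [f]
    rw [neg_pow t]
    ring
  calc chooseGF l (binomWeight l t) = ∑' k, ∑' j, f (k, j) :=
        tsum_congr fun k => (hrow k).tsum_eq.symm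
    _ = ∑' p, f p := (hf.tsum_prod' fun k => (hrow k).summable).symm
    _ = ∑' n, ((l : ℝ) * t) ^ n := by
        rw [hf.tsum_eq_tsum_sum_antidiagonal]
        exact tsum_congr hdiag
    _ = (1 - l * t)⁻¹ := tsum_geometric_of_lt_one (by positivity) ht

theorem chooseGF_binomWeight (hl : 2 ≤ l) (ht0 : 0 < t) (ht : l * t < 1) :
    chooseGF l (binomWeight l t) = (1 - l * t)⁻¹ := by
  have hl0 : (0 : ℝ) < l := by positivity
  have hU {s : ℝ} (hs : s ∈ Set.Ioo 0 (l : ℝ)⁻¹) : 0 < s ∧ l * s < 1 :=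
    ⟨hs.1, (lt_inv_iff_mul_lt_one₀ hl0).1 hs.2⟩
  have hlhs : AnalyticOnNhd ℝ (fun s => chooseGF l (binomWeight l s)) (Set.Ioo 0 (l : ℝ)⁻¹) :=
    fun s hs => (analyticAt_chooseGF (by omega)
      (abs_binomWeight_lt hl (hU hs).1.le (hU hs).2)).comp (by unfold binomWeight; fun_prop)
  have hrhs : AnalyticOnNhd ℝ (fun s : ℝ => (1 - l * s)⁻¹) (Set.Ioo 0 (l : ℝ)⁻¹) :=
    fun s hs => (by fun_prop : AnalyticAt ℝ (fun s : ℝ => 1 - l * s) s).inv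
      (by linarith [(hU hs).2])
  have hρ : 0 < binomWeight l (l : ℝ)⁻¹ := by
    simpa [binomWeight] using abs_binomWeight_lt hl le_rfl (by simp)
  have hsmall : ∀ᶠ s in nhds (0 : ℝ), s * (1 + s) ^ (l - 1) < binomWeight l (l : ℝ)⁻¹ := by
    refine Filter.Tendsto.eventually_lt_const hρ ?_
    have hcont : Continuous fun s : ℝ => s * (1 + s) ^ (l - 1) := by fun_prop
    simpa using hcont.tendsto 0
  obtain ⟨δ, hδ, hsmallδ⟩ := Metric.eventually_nhds_iff.1 hsmall
  set δ' := min δ (l : ℝ)⁻¹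
  have hδ' : 0 < δ' := lt_min hδ (by positivity)
  have hev : (fun s => chooseGF l (binomWeight l s)) =ᶠ[nhds (δ' / 2)]
      fun s : ℝ => (1 - l * s)⁻¹ := by
    filter_upwards [isOpen_Ioo.mem_nhds (show δ' / 2 ∈ Set.Ioo 0 δ' by constructor <;> linarith)]
      with s hs
    refine chooseGF_binomWeight_of_small (by omega) hs.1.le (hsmallδ ?_) (hU ?_).2
    · rw [Real.dist_0_eq_abs, abs_of_pos hs.1]
      exact hs.2.trans_le (min_le_left _ _)
    · exact ⟨hs.1, hs.2.trans_le (min_le_right _ _)⟩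
  exact hlhs.eqOn_of_preconnected_of_eventuallyEq hrhs isPreconnected_Ioo
    ⟨by linarith, by linarith [min_le_right δ (l : ℝ)⁻¹]⟩ hev
    ⟨ht0, (lt_inv_iff_mul_lt_one₀ hl0).2 ht⟩

theorem tsum_mul_choose_mul_binomWeight_pow (hl : 2 ≤ l) (ht0 : 0 < t) (ht : l * t < 1) :
    ∑' k : ℕ, (k : ℝ) * (k * l).choose k * binomWeight l t ^ k
      = l * t * (1 - t) / (1 - l * t) ^ 3 := by
  have hl0 : (0 : ℝ) < l := by positivity
  have hw := abs_binomWeight_lt hl ht0.le ht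
  set D := ∑' k : ℕ, ((k * l).choose k : ℝ) * (k * binomWeight l t ^ (k - 1))
  have hF : HasDerivAt (chooseGF l) D (binomWeight l t) :=
    hasDerivAt_tsum_coeff_mul_pow (abs_choose_mul_binomWeight_inv_pow_le_one (by omega)) hw
  have hrhs : HasDerivAt (fun s : ℝ => (1 - l * s)⁻¹) (l / (1 - l * t) ^ 2) t := by
    have h : HasDerivAt (fun s : ℝ => 1 - l * s) (-l) t := by
      simpa using ((hasDerivAt_id' t).const_mul (l : ℝ)).const_sub 1
    exact (h.fun_inv (by linarith)).congr_deriv (by ring)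
  have heq : (fun s => chooseGF l (binomWeight l s)) =ᶠ[nhds t] fun s : ℝ => (1 - l * s)⁻¹ := by
    filter_upwards [isOpen_Ioo.mem_nhds (show t ∈ Set.Ioo 0 (l : ℝ)⁻¹ from
      ⟨ht0, (lt_inv_iff_mul_lt_one₀ hl0).2 ht⟩)] with s hs
    exact chooseGF_binomWeight hl hs.1 ((lt_inv_iff_mul_lt_one₀ hl0).1 hs.2)
  have hD : D * ((1 - t) ^ (l - 2) * (1 - l * t)) = l / (1 - l * t) ^ 2 :=
    (hF.comp t (hasDerivAt_binomWeight hl t)).unique (hrhs.congr_of_eventuallyEq heq)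
  have hsum : ∑' k : ℕ, (k : ℝ) * (k * l).choose k * binomWeight l t ^ k
      = binomWeight l t * D := by
    rw [← tsum_mul_left]
    refine tsum_congr fun k => ?_
    rcases k with _ | k
    · simp
    · rw [Nat.add_sub_cancel, pow_succ]
      ring
  have hpow : (1 - t) ^ (l - 1) = (1 - t) ^ (l - 2) * (1 - t) := by
    rw [← pow_succ, show l - 2 + 1 = l - 1 by omega]
  have hne : 1 - l * t ≠ 0 := by linarith
  have hD' : (1 - t) ^ (l - 2) * D = l / (1 - l * t) ^ 3 := by
    rw [pow_succ, ← div_div]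
    exact eq_div_of_mul_eq hne (by linear_combination hD)
  rw [hsum, binomWeight, hpow]
  linear_combination t * (1 - t) * hD'

end BinomWeight

theorem busy_time_second_moment_general (l : ℕ) (hl : 2 ≤ l) (ε : ℝ)
    (hε0 : 0 < ε) (hcap : (l : ℝ) * ε < 1) :
    ∑' k : ℕ, ((k : ℝ) + 1) ^ 2 *
        (((l : ℝ) - 1) / ((k : ℝ) + 1) * ε ^ (k + 1)
          * (1 - ε) ^ ((k + 1) * (l - 1)) * (Nat.choose (k * l) k : ℝ))
      = ((l : ℝ) - 1) * ε * (1 - ε) ^ (l - 1) / (1 - (l : ℝ) * ε)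
        + (l : ℝ) * ((l : ℝ) - 1) * ε ^ 2 * (1 - ε) ^ l / (1 - (l : ℝ) * ε) ^ 3 := by
  have hc := abs_choose_mul_binomWeight_inv_pow_le_one (l := l) (by omega)
  have hz := abs_binomWeight_lt hl hε0.le hcap
  have hterm (k : ℕ) : ((k : ℝ) + 1) ^ 2 * (((l : ℝ) - 1) / ((k : ℝ) + 1) * ε ^ (k + 1)
        * (1 - ε) ^ ((k + 1) * (l - 1)) * (Nat.choose (k * l) k : ℝ))
      = ((l - 1) * ε * (1 - ε) ^ (l - 1)) * ((k : ℝ) * (k * l).choose k * binomWeight l ε ^ k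
          + (k * l).choose k * binomWeight l ε ^ k) := by
    rw [binomWeight, mul_pow, ← pow_mul, Nat.add_one_mul k (l - 1), pow_add, pow_succ]
    field_simp
    ring
  have hgf := chooseGF_binomWeight hl hε0 hcap
  rw [chooseGF] at hgf
  have hpow : (1 - ε) ^ l = (1 - ε) ^ (l - 1) * (1 - ε) := by
    rw [← pow_succ, Nat.sub_add_cancel (by omega)]
  have hne : 1 - (l : ℝ) * ε ≠ 0 := by linarith
  have hs1 : Summable fun k : ℕ => (k : ℝ) * (k * l).choose k * binomWeight l ε ^ k := by
    simpa using summable_pow_mul_coeff_mul_pow hc hz 1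
  have hs0 : Summable fun k : ℕ => ((k * l).choose k : ℝ) * binomWeight l ε ^ k := by
    simpa using summable_pow_mul_coeff_mul_pow hc hz 0
  rw [tsum_congr hterm, tsum_mul_left, hs1.tsum_add hs0]
  rw [tsum_mul_choose_mul_binomWeight_pow hl hε0 hcap, hgf, hpow]
  field_simp
  ring

/-- Second moment of the busy time: for `0 < ε < 1`, `l ≥ 2`, `lε < 1`,
`E(S²) = E(S) + l(l-1)ε²(1-ε)^l/(1-lε)³` where
`E(S) = (l-1)ε(1-ε)^{l-1}/(1-lε)` (sum re-indexed via `s = k+1`). -/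
theorem busy_time_second_moment (l : ℕ) (hl : 2 ≤ l) (ε : ℝ)
    (hε0 : 0 < ε) (hε1 : ε < 1) (hcap : (l : ℝ) * ε < 1) :
    ∑' k : ℕ, ((k : ℝ) + 1) ^ 2 *
        (((l : ℝ) - 1) / ((k : ℝ) + 1) * ε ^ (k + 1)
          * (1 - ε) ^ ((k + 1) * (l - 1)) * (Nat.choose (k * l) k : ℝ))
      = ((l : ℝ) - 1) * ε * (1 - ε) ^ (l - 1) / (1 - (l : ℝ) * ε)
        + (l : ℝ) * ((l : ℝ) - 1) * ε ^ 2 * (1 - ε) ^ l / (1 - (l : ℝ) * ε) ^ 3 :=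
  busy_time_second_moment_general l hl ε hε0 hcap
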